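/- Let n₁, …, n₆ be squarefree positive integers that are pairwise coprime with n₁⋯n₆ ≤ √x, and suppose at most 2 of them exceed 2z where z ≥ 2. Write m = ∏_{nᵢ < 2z} nᵢ and n = ∏_{nᵢ ≥ 2z} nᵢ. Then each value of m arises from at most 6^{ω(m)} tuples (restricted to the small coordinates) and each value of n from at most 15·2^{ω(n)} tuples, and consequently ∑ 2^{−ω(n₁)}⋯2^{−ω(n₆)} ≪ √x · ∑_{m ≤ (2z)⁶} 3^{ω(m)}/m ≪ √x·(log z)³, where the first sum runs over all such tuples (n₁,…,n₆). -/

import Mathlib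

open Finset


lemma omega_prod {ι : Type*} (s : Finset ι) (v : ι → ℕ)
    (h0 : ∀ i ∈ s, v i ≠ 0)
    (hc : ∀ i ∈ s, ∀ j ∈ s, i ≠ j → Nat.Coprime (v i) (v j)) :
    (∏ i ∈ s, v i).primeFactors.card = ∑ i ∈ s, (v i).primeFactors.card := by
  induction s using Finset.cons_induction with
  | empty => simp
  | cons a s ha ih =>
    rw [Finset.prod_cons, Finset.sum_cons]
    have hcop : Nat.Coprime (v a) (∏ i ∈ s, v i) :=
      Nat.Coprime.prod_right fun i hi =>
        hc a (mem_cons_self _ _) i (mem_cons_of_mem hi) (by rintro rfl; exact ha hi)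
    rw [hcop.primeFactors_mul, Finset.card_union_of_disjoint hcop.disjoint_primeFactors,
      ih (fun i hi => h0 i (mem_cons_of_mem hi))
        (fun i hi j hj hij => hc i (mem_cons_of_mem hi) j (mem_cons_of_mem hj) hij)]

lemma squarefree_prod {ι : Type*} (s : Finset ι) (v : ι → ℕ)
    (hs : ∀ i ∈ s, Squarefree (v i))
    (hc : ∀ i ∈ s, ∀ j ∈ s, i ≠ j → Nat.Coprime (v i) (v j)) :
    Squarefree (∏ i ∈ s, v i) := by
  induction s using Finset.cons_induction with
  | empty => simpa using squarefree_one
  | cons a s ha ih =>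
    rw [Finset.prod_cons]
    have hcop : Nat.Coprime (v a) (∏ i ∈ s, v i) :=
      Nat.Coprime.prod_right fun i hi =>
        hc a (mem_cons_self _ _) i (mem_cons_of_mem hi) (by rintro rfl; exact ha hi)
    exact (Nat.squarefree_mul hcop).mpr ⟨hs a (mem_cons_self _ _),
      ih (fun i hi => hs i (mem_cons_of_mem hi))
        (fun i hi j hj hij => hc i (mem_cons_of_mem hi) j (mem_cons_of_mem hj) hij)⟩


open Classical in
lemma tuple_inj (k m : ℕ) (hk : 0 < k) (hm : Squarefree m) :
    ∃ Φ : {v : Fin k → ℕ // (∀ i, Squarefree (v i)) ∧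
        (∀ i j, i ≠ j → Nat.Coprime (v i) (v j)) ∧ (∏ i, v i) = m} →
      ({ p // p ∈ m.primeFactors } → Fin k), Function.Injective Φ := by
  have hm0 : m ≠ 0 := hm.ne_zero
  let F : (Fin k → ℕ) → ℕ → Fin k := fun v q =>
    if h : ∃ i, q ∣ v i ∧ q.Prime then h.choose else ⟨0, hk⟩
  have key : ∀ v : Fin k → ℕ, (∀ i, Squarefree (v i)) →
      (∀ i j, i ≠ j → Nat.Coprime (v i) (v j)) → (∏ i, v i) = m →
      ∀ i, v i = ∏ q ∈ m.primeFactors.filter (fun q => F v q = i), q := by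
    intro v hsq hcop hprod i
    have hpf : (v i).primeFactors = m.primeFactors.filter (fun q => F v q = i) := by
      ext q
      simp only [Finset.mem_filter, Nat.mem_primeFactors]
      constructor
      · rintro ⟨hq, hqv, -⟩
        have hvm : v i ∣ m := hprod ▸ Finset.dvd_prod_of_mem v (Finset.mem_univ i)
        have h : ∃ j, q ∣ v j ∧ q.Prime := ⟨i, hqv, hq⟩
        refine ⟨⟨hq, hqv.trans hvm, hm0⟩, ?_⟩
        show (if h' : ∃ j, q ∣ v j ∧ q.Prime then h'.choose else ⟨0, hk⟩) = i
        rw [dif_pos h]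
        by_contra hne
        exact hq.ne_one
          (Nat.eq_one_of_dvd_coprimes (hcop _ _ hne) h.choose_spec.1 hqv)
      · rintro ⟨⟨hq, hqm, -⟩, hF⟩
        have h : ∃ j, q ∣ v j ∧ q.Prime := by
          obtain ⟨j, -, hj⟩ := hq.prime.exists_mem_finset_dvd (s := Finset.univ) (f := v)
            (by rw [hprod]; exact hqm)
          exact ⟨j, hj, hq⟩
        simp only [F, dif_pos h] at hF
        exact ⟨hq, hF ▸ h.choose_spec.1, (hsq i).ne_zero⟩
    conv_lhs => rw [← Nat.prod_primeFactors_of_squarefree (hsq i), hpf]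
  refine ⟨fun v p => F (v : Fin k → ℕ) p.1, fun a b hab => ?_⟩
  obtain ⟨hsa, hca, hpa⟩ := a.2
  obtain ⟨hsb, hcb, hpb⟩ := b.2
  refine Subtype.ext (funext fun i => ?_)
  rw [key a.1 hsa hca hpa i, key b.1 hsb hcb hpb i]
  refine Finset.prod_congr (Finset.filter_congr fun q hq => ?_) fun _ _ => rfl
  rw [show F a.1 q = F b.1 q from congrFun hab ⟨q, hq⟩]

lemma part1 (k m : ℕ) (hk : 0 < k) (hm : Squarefree m) :
    Nat.card {v : Fin k → ℕ // (∀ i, Squarefree (v i)) ∧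
        (∀ i j, i ≠ j → Nat.Coprime (v i) (v j)) ∧ (∏ i, v i) = m} ≤
      k ^ m.primeFactors.card := by
  obtain ⟨Φ, hΦ⟩ := tuple_inj k m hk hm
  calc Nat.card _ ≤ Nat.card ({ p // p ∈ m.primeFactors } → Fin k) :=
        Nat.card_le_card_of_injective Φ hΦ
    _ = k ^ m.primeFactors.card := by
        rw [Nat.card_fun, Nat.card_eq_finsetCard, Nat.card_eq_fintype_card, Fintype.card_fin]

lemma part1_finite (k m : ℕ) (hk : 0 < k) (hm : Squarefree m) :
    Finite {v : Fin k → ℕ // (∀ i, Squarefree (v i)) ∧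
        (∀ i j, i ≠ j → Nat.Coprime (v i) (v j)) ∧ (∏ i, v i) = m} := by
  obtain ⟨Φ, hΦ⟩ := tuple_inj k m hk hm
  exact Finite.of_injective Φ hΦ


open Classical in
lemma tuple2_inj (n z : ℕ) (hn : Squarefree n) (hz : 2 ≤ z) :
    ∃ Φ : {v : Fin 6 → ℕ // (∀ i, Squarefree (v i)) ∧
        (∀ i j, i ≠ j → Nat.Coprime (v i) (v j)) ∧ (∏ i, v i) = n ∧
        (∀ i, v i = 1 ∨ 2 * z ≤ v i) ∧
        (Finset.univ.filter fun i => 2 * z ≤ v i).card ≤ 2} →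
      ({t : Finset (Fin 6) // t.card = 2} × ({ p // p ∈ n.primeFactors } → Fin 2)),
      Function.Injective Φ := by
  have hn0 : n ≠ 0 := hn.ne_zero
  set ST := {v : Fin 6 → ℕ // (∀ i, Squarefree (v i)) ∧
        (∀ i j, i ≠ j → Nat.Coprime (v i) (v j)) ∧ (∏ i, v i) = n ∧
        (∀ i, v i = 1 ∨ 2 * z ≤ v i) ∧
        (Finset.univ.filter fun i => 2 * z ≤ v i).card ≤ 2} with hST
  have ex : ∀ v : ST, ∃ t : Finset (Fin 6),
      (Finset.univ.filter fun i => 2 * z ≤ (v : Fin 6 → ℕ) i) ⊆ t ∧ t.card = 2 :=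
    fun v => Finset.exists_superset_card_eq v.2.2.2.2.2 (by simp)
  let t : ST → Finset (Fin 6) := fun v => (ex v).choose
  have ht : ∀ v : ST, (Finset.univ.filter fun i => 2 * z ≤ (v : Fin 6 → ℕ) i) ⊆ t v
      ∧ (t v).card = 2 := fun v => (ex v).choose_spec
  have htne : ∀ v : ST, (t v).Nonempty :=
    fun v => Finset.card_pos.mp (by rw [(ht v).2]; norm_num)
  have min_congr : ∀ {s s' : Finset (Fin 6)} (h : s = s') (hs : s.Nonempty) (hs' : s'.Nonempty),
      s.min' hs = s'.min' hs' := by rintro s s' rfl hs hs'; rfl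
  refine ⟨fun v => (⟨t v, (ht v).2⟩,
    fun p => if (p : ℕ) ∣ (v : Fin 6 → ℕ) ((t v).min' (htne v)) then 0 else 1), ?_⟩
  intro a b hab
  have hteq : t a = t b := congrArg Subtype.val (congrArg Prod.fst hab)
  have h2 : (t a).card = 2 := (ht a).2
  have hlt : (t a).min' (htne a) < (t a).max' (htne a) :=
    Finset.min'_lt_max'_of_card _ (by rw [h2]; norm_num)
  set i0 := (t a).min' (htne a) with hi0
  set i1 := (t a).max' (htne a) with hi1
  have ht01 : t a = {i0, i1} := by
    refine (Finset.eq_of_subset_of_card_le ?_ ?_).symm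
    · intro i hi
      rcases Finset.mem_insert.mp hi with rfl | hi
      · exact Finset.min'_mem _ _
      · rw [Finset.mem_singleton.mp hi]; exact Finset.max'_mem _ _
    · rw [h2, Finset.card_insert_of_notMem (by simp [hlt.ne]), Finset.card_singleton]
  have hbmin : (t b).min' (htne b) = i0 := min_congr hteq.symm _ _
  -- reconstruction claims, for any v with t v = t a
  have key : ∀ v : ST, t v = t a →
      ((v : Fin 6 → ℕ) i0 = ∏ q ∈ n.primeFactors.filter (fun q => q ∣ (v : Fin 6 → ℕ) i0), q)
      ∧ ((v : Fin 6 → ℕ) i1 = ∏ q ∈ n.primeFactors.filter (fun q => ¬ q ∣ (v : Fin 6 → ℕ) i0), q)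
      ∧ (∀ i, i ∉ t a → (v : Fin 6 → ℕ) i = 1) := by
    intro v htv
    obtain ⟨hsq, hcop, hprod, hone, hcard⟩ := v.2
    have hsub : (Finset.univ.filter fun i => 2 * z ≤ (v : Fin 6 → ℕ) i) ⊆ t a :=
      by rw [← htv]; exact (ht v).1
    have hnotin : ∀ i, i ∉ t a → (v : Fin 6 → ℕ) i = 1 := by
      intro i hi
      rcases hone i with h1 | hb
      · exact h1
      · exact absurd (hsub (Finset.mem_filter.mpr ⟨Finset.mem_univ i, hb⟩)) hi
    have hdvd : ∀ i, (v : Fin 6 → ℕ) i ∣ n :=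
      fun i => dvd_trans (Finset.dvd_prod_of_mem _ (Finset.mem_univ i)) (dvd_of_eq hprod)
    have hmem : ∀ q : ℕ, q.Prime → ∀ i, q ∣ (v : Fin 6 → ℕ) i → i ∈ t a := by
      intro q hq i hqi
      rcases hone i with h1 | hb
      · exact absurd (Nat.eq_one_of_dvd_one (h1 ▸ hqi)) hq.ne_one
      · exact hsub (Finset.mem_filter.mpr ⟨Finset.mem_univ i, hb⟩)
    have hpf0 : ((v : Fin 6 → ℕ) i0).primeFactors
        = n.primeFactors.filter (fun q => q ∣ (v : Fin 6 → ℕ) i0) := by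
      ext q
      simp only [Finset.mem_filter, Nat.mem_primeFactors]
      exact ⟨fun ⟨hq, hqv, _⟩ => ⟨⟨hq, hqv.trans (hdvd i0), hn0⟩, hqv⟩,
        fun ⟨⟨hq, _, _⟩, hqv⟩ => ⟨hq, hqv, (hsq i0).ne_zero⟩⟩
    have hpf1 : ((v : Fin 6 → ℕ) i1).primeFactors
        = n.primeFactors.filter (fun q => ¬ q ∣ (v : Fin 6 → ℕ) i0) := by
      ext q
      simp only [Finset.mem_filter, Nat.mem_primeFactors]
      constructor
      · rintro ⟨hq, hqv, -⟩
        refine ⟨⟨hq, hqv.trans (hdvd i1), hn0⟩, fun hq0 => hq.ne_one ?_⟩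
        exact Nat.eq_one_of_dvd_coprimes (hcop i0 i1 hlt.ne) hq0 hqv
      · rintro ⟨⟨hq, hqn, -⟩, hq0⟩
        obtain ⟨j, -, hj⟩ := hq.prime.exists_mem_finset_dvd (s := Finset.univ)
          (f := (v : Fin 6 → ℕ)) (by rw [hprod]; exact hqn)
        have hjt : j ∈ t a := hmem q hq j hj
        have hji : j = i1 := by
          rw [ht01] at hjt
          rcases Finset.mem_insert.mp hjt with rfl | hjt
          · exact absurd hj hq0
          · exact Finset.mem_singleton.mp hjt
        exact ⟨hq, hji ▸ hj, (hsq i1).ne_zero⟩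
    refine ⟨?_, ?_, hnotin⟩
    · conv_lhs => rw [← Nat.prod_primeFactors_of_squarefree (hsq i0), hpf0]
    · conv_lhs => rw [← Nat.prod_primeFactors_of_squarefree (hsq i1), hpf1]
  have hfun : ∀ q ∈ n.primeFactors,
      (q ∣ (a : Fin 6 → ℕ) i0 ↔ q ∣ (b : Fin 6 → ℕ) i0) := by
    intro q hq
    have h := congrFun (congrArg Prod.snd hab) ⟨q, hq⟩
    simp only [hbmin, ← hi0] at h
    constructor
    · intro h1
      by_contra h2
      rw [if_pos h1, if_neg h2] at h
      exact absurd h (by decide)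
    · intro h2
      by_contra h1
      rw [if_neg h1, if_pos h2] at h
      exact absurd h (by decide)
  obtain ⟨ka0, ka1, ka⟩ := key a rfl
  obtain ⟨kb0, kb1, kb⟩ := key b hteq.symm
  refine Subtype.ext (funext fun i => ?_)
  by_cases hi : i ∈ t a
  · rw [ht01] at hi
    rcases Finset.mem_insert.mp hi with rfl | hi
    · rw [ka0, kb0]
      exact Finset.prod_congr
        (Finset.filter_congr fun q hq => hfun q hq)
        fun _ _ => rfl
    · rw [Finset.mem_singleton.mp hi, ka1, kb1]
      exact Finset.prod_congr
        (Finset.filter_congr fun q hq => not_congr (hfun q hq))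
        fun _ _ => rfl
  · rw [ka i hi, kb i hi]


lemma part2_finite (n z : ℕ) (hn : Squarefree n) (hz : 2 ≤ z) :
    Finite {v : Fin 6 → ℕ // (∀ i, Squarefree (v i)) ∧
        (∀ i j, i ≠ j → Nat.Coprime (v i) (v j)) ∧ (∏ i, v i) = n ∧
        (∀ i, v i = 1 ∨ 2 * z ≤ v i) ∧
        (Finset.univ.filter fun i => 2 * z ≤ v i).card ≤ 2} := by
  obtain ⟨Φ, hΦ⟩ := tuple2_inj n z hn hz
  exact Finite.of_injective Φ hΦ

lemma part2 (n z : ℕ) (hn : Squarefree n) (hz : 2 ≤ z) :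
    Nat.card {v : Fin 6 → ℕ // (∀ i, Squarefree (v i)) ∧
        (∀ i j, i ≠ j → Nat.Coprime (v i) (v j)) ∧ (∏ i, v i) = n ∧
        (∀ i, v i = 1 ∨ 2 * z ≤ v i) ∧
        (Finset.univ.filter fun i => 2 * z ≤ v i).card ≤ 2} ≤
      15 * 2 ^ n.primeFactors.card := by
  obtain ⟨Φ, hΦ⟩ := tuple2_inj n z hn hz
  calc Nat.card _
      ≤ Nat.card ({t : Finset (Fin 6) // t.card = 2} × ({ p // p ∈ n.primeFactors } → Fin 2)) :=
        Nat.card_le_card_of_injective Φ hΦ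
    _ = 15 * 2 ^ n.primeFactors.card := by
        rw [Nat.card_prod, Nat.card_fun, Nat.card_eq_finsetCard,
          Nat.card_eq_fintype_card (α := Fin 2), Fintype.card_fin,
          Nat.card_eq_fintype_card (α := {t : Finset (Fin 6) // t.card = 2}),
          Fintype.card_finset_len, Fintype.card_fin]
        norm_num [Nat.choose]


open Classical in
lemma card_le_triples (m M : ℕ) (hm : Squarefree m) (h1 : 1 ≤ m) (hM : m ≤ M) :
    3 ^ m.primeFactors.card ≤
      ((Fintype.piFinset fun _ : Fin 3 => Finset.Icc 1 M).filter fun q => ∏ j, q j = m).card := by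
  have hm0 : m ≠ 0 := hm.ne_zero
  set box := (Fintype.piFinset fun _ : Fin 3 => Finset.Icc 1 M).filter fun q => ∏ j, q j = m
    with hbox
  let P : ({ p // p ∈ m.primeFactors } → Fin 3) → Fin 3 → ℕ := fun f j =>
    ∏ p ∈ m.primeFactors.attach.filter (fun p => f p = j), (p : ℕ)
  have hPdvd : ∀ f j, P f j ∣ m := by
    intro f j
    have : P f j ∣ ∏ p ∈ m.primeFactors.attach, (p : ℕ) :=
      Finset.prod_dvd_prod_of_subset _ _ _ (Finset.filter_subset _ _)
    rwa [Finset.prod_attach m.primeFactors (fun q => q),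
      Nat.prod_primeFactors_of_squarefree hm] at this
  have hPprod : ∀ f, ∏ j, P f j = m := by
    intro f
    rw [Finset.prod_fiberwise_of_maps_to (fun p _ => Finset.mem_univ (f p)) (fun p => (p : ℕ)),
      Finset.prod_attach m.primeFactors (fun q => q), Nat.prod_primeFactors_of_squarefree hm]
  have hmem : ∀ f, P f ∈ box := by
    intro f
    rw [hbox, Finset.mem_filter, Fintype.mem_piFinset]
    refine ⟨fun j => Finset.mem_Icc.mpr ⟨?_, ?_⟩, hPprod f⟩
    · exact Nat.one_le_iff_ne_zero.mpr fun h => hm0 (Nat.eq_zero_of_zero_dvd (h ▸ hPdvd f j))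
    · exact le_trans (Nat.le_of_dvd (Nat.pos_of_ne_zero hm0) (hPdvd f j)) hM
  have hinj : Function.Injective (fun f => (⟨P f, hmem f⟩ : {q // q ∈ box})) := by
    intro f g hfg
    have hPeq : ∀ j, P f j = P g j := fun j => congrFun (congrArg Subtype.val hfg) j
    funext p
    have hdvd : (p : ℕ) ∣ P g (f p) := by
      rw [← hPeq (f p)]
      exact Finset.dvd_prod_of_mem _
        (Finset.mem_filter.mpr ⟨Finset.mem_attach _ _, rfl⟩)
    have hp : (p : ℕ).Prime := Nat.prime_of_mem_primeFactors p.2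
    obtain ⟨r, hr, hpr⟩ := hp.prime.exists_mem_finset_dvd hdvd
    have : (p : ℕ) = (r : ℕ) :=
      (Nat.prime_dvd_prime_iff_eq hp (Nat.prime_of_mem_primeFactors r.2)).mp hpr
    have hrp : r = p := Subtype.ext this.symm
    rw [← (Finset.mem_filter.mp hr).2, hrp]
  calc 3 ^ m.primeFactors.card
      = Fintype.card ({ p // p ∈ m.primeFactors } → Fin 3) := by
        rw [Fintype.card_fun, Fintype.card_fin, Fintype.card_coe]
    _ ≤ Fintype.card {q // q ∈ box} := Fintype.card_le_of_injective _ hinj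
    _ = box.card := Fintype.card_coe box

lemma sum_three_omega (M : ℕ) (hM : 1 ≤ M) :
    ∑ m ∈ (Finset.Icc 1 M).filter Squarefree, (3:ℝ) ^ m.primeFactors.card / m ≤
      (∑ k ∈ Finset.Icc 1 M, (1:ℝ) / k) ^ 3 := by
  classical
  set box := Fintype.piFinset fun _ : Fin 3 => Finset.Icc 1 M with hbox
  have hrhs : (∑ k ∈ Finset.Icc 1 M, (1:ℝ) / k) ^ 3
      = ∑ q ∈ box, ∏ j : Fin 3, (1:ℝ) / (q j) := by
    rw [hbox, ← Finset.prod_univ_sum (fun _ : Fin 3 => Finset.Icc 1 M) (fun _ k => (1:ℝ) / k)]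
    simp [Finset.prod_const]
  have hπ : ∀ q ∈ box, (∏ j, q j) ∈ box.image (fun q => ∏ j, q j) :=
    fun q hq => Finset.mem_image_of_mem _ hq
  have hsubset : (Finset.Icc 1 M).filter Squarefree ⊆ box.image (fun q => ∏ j, q j) := by
    intro m hm
    obtain ⟨hmI, -⟩ := Finset.mem_filter.mp hm
    refine Finset.mem_image.mpr ⟨fun j => if j = 0 then m else 1, ?_, by simp⟩
    rw [hbox, Fintype.mem_piFinset]
    intro j
    by_cases hj : j = 0 <;> simp [hj, Finset.mem_Icc.mp hmI, hM]
  have hpoint : ∀ m ∈ (Finset.Icc 1 M).filter Squarefree,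
      (3:ℝ) ^ m.primeFactors.card / m
        ≤ ∑ q ∈ box.filter (fun q => (∏ j, q j) = m), ∏ j : Fin 3, (1:ℝ) / (q j) := by
    intro m hm
    obtain ⟨hmI, hsq⟩ := Finset.mem_filter.mp hm
    obtain ⟨h1m, hmM⟩ := Finset.mem_Icc.mp hmI
    have hfiber : ∀ q ∈ box.filter (fun q => (∏ j, q j) = m),
        ∏ j : Fin 3, (1:ℝ) / (q j) = 1 / m := by
      intro q hq
      obtain ⟨-, hqm⟩ := Finset.mem_filter.mp hq
      rw [← hqm]
      push_cast
      rw [Finset.prod_div_distrib]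
      simp
    rw [Finset.sum_congr rfl hfiber, Finset.sum_const, nsmul_eq_mul]
    have hcard : (3:ℝ) ^ m.primeFactors.card
        ≤ ((box.filter fun q => (∏ j, q j) = m).card : ℝ) := by
      exact_mod_cast card_le_triples m M hsq h1m hmM
    rw [div_eq_mul_one_div]
    exact mul_le_mul_of_nonneg_right hcard (by positivity)
  calc ∑ m ∈ (Finset.Icc 1 M).filter Squarefree, (3:ℝ) ^ m.primeFactors.card / m
      ≤ ∑ m ∈ (Finset.Icc 1 M).filter Squarefree,
          ∑ q ∈ box.filter (fun q => (∏ j, q j) = m), ∏ j : Fin 3, (1:ℝ) / (q j) :=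
        Finset.sum_le_sum hpoint
    _ ≤ ∑ m ∈ box.image (fun q => ∏ j, q j),
          ∑ q ∈ box.filter (fun q => (∏ j, q j) = m), ∏ j : Fin 3, (1:ℝ) / (q j) :=
        Finset.sum_le_sum_of_subset_of_nonneg hsubset
          (fun m _ _ => Finset.sum_nonneg fun q _ =>
            Finset.prod_nonneg fun j _ => by positivity)
    _ = ∑ q ∈ box, ∏ j : Fin 3, (1:ℝ) / (q j) :=
        Finset.sum_fiberwise_of_maps_to hπ _
    _ = (∑ k ∈ Finset.Icc 1 M, (1:ℝ) / k) ^ 3 := hrhs.symm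

open Classical in
lemma part3 : ∃ C : ℝ, 0 < C ∧ ∀ (x : ℝ) (z : ℕ), 2 ≤ x → 2 ≤ z →
    ∑ v ∈ (Fintype.piFinset fun _ : Fin 6 => Finset.Icc 1 ⌊Real.sqrt x⌋₊).filter
        (fun v => (∀ i, Squarefree (v i)) ∧
          (∀ i j, i ≠ j → Nat.Coprime (v i) (v j)) ∧
          ((∏ i, v i : ℕ) : ℝ) ≤ Real.sqrt x ∧
          (Finset.univ.filter fun i => 2 * z ≤ v i).card ≤ 2),
        ∏ i, (2 : ℝ) ^ (-((v i).primeFactors.card : ℤ)) ≤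
      C * (Real.sqrt x * Real.log z ^ 3) := by
  refine ⟨15 * 14 ^ 3, by norm_num, fun x z hx hz => ?_⟩
  set X := Real.sqrt x with hXdef
  have hX0 : 0 ≤ X := Real.sqrt_nonneg x
  set M := (2 * z) ^ 6 with hMdef
  have hM1 : 1 ≤ M := Nat.one_le_iff_ne_zero.mpr (by positivity)
  set S := (Fintype.piFinset fun _ : Fin 6 => Finset.Icc 1 ⌊X⌋₊).filter
      (fun v => (∀ i, Squarefree (v i)) ∧
        (∀ i j, i ≠ j → Nat.Coprime (v i) (v j)) ∧
        ((∏ i, v i : ℕ) : ℝ) ≤ X ∧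
        (Finset.univ.filter fun i => 2 * z ≤ v i).card ≤ 2) with hSdef
  set g : (Fin 6 → ℕ) → ℕ × ℕ := fun v =>
    (∏ i ∈ Finset.univ.filter (fun i => ¬ 2 * z ≤ v i), v i,
     ∏ i ∈ Finset.univ.filter (fun i => 2 * z ≤ v i), v i) with hgdef
  set w : (Fin 6 → ℕ) → ℝ := fun v => ∏ i, (2 : ℝ) ^ (-((v i).primeFactors.card : ℤ)) with hwdef
  -- basic facts about members of S
  have hS : ∀ v ∈ S, (∀ i, 1 ≤ v i) ∧ (∀ i, Squarefree (v i)) ∧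
      (∀ i j, i ≠ j → Nat.Coprime (v i) (v j)) ∧ ((∏ i, v i : ℕ) : ℝ) ≤ X ∧
      (Finset.univ.filter fun i => 2 * z ≤ v i).card ≤ 2 := by
    intro v hv
    rw [hSdef, Finset.mem_filter, Fintype.mem_piFinset] at hv
    exact ⟨fun i => (Finset.mem_Icc.mp (hv.1 i)).1, hv.2.1, hv.2.2.1, hv.2.2.2.1, hv.2.2.2.2⟩
  -- weight value on fibers
  have hW : ∀ v ∈ S, w v
      = ((2:ℝ) ^ ((g v).1.primeFactors.card + (g v).2.primeFactors.card))⁻¹ := by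
    intro v hv
    obtain ⟨h1, hsq, hcop, -, -⟩ := hS v hv
    have h0 : ∀ i, v i ≠ 0 := fun i => (hsq i).ne_zero
    have hsum : (g v).1.primeFactors.card + (g v).2.primeFactors.card
        = ∑ i, (v i).primeFactors.card := by
      rw [hgdef]
      simp only
      rw [omega_prod _ v (fun i _ => h0 i) (fun i _ j _ hij => hcop i j hij),
        omega_prod _ v (fun i _ => h0 i) (fun i _ j _ hij => hcop i j hij), add_comm,
        Finset.sum_filter_add_sum_filter_not]
    rw [hsum, hwdef]
    simp only
    rw [← Finset.prod_pow_eq_pow_sum, ← Finset.prod_inv_distrib]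
    refine Finset.prod_congr rfl fun i _ => ?_
    rw [zpow_neg, zpow_natCast]
  -- facts about image elements
  have hI : ∀ p ∈ S.image g, 1 ≤ p.1 ∧ 1 ≤ p.2 ∧ ((p.1 * p.2 : ℕ) : ℝ) ≤ X ∧
      Squarefree p.1 ∧ Squarefree p.2 ∧ p.1 ≤ M := by
    intro p hp
    obtain ⟨v, hvS, rfl⟩ := Finset.mem_image.mp hp
    obtain ⟨h1, hsq, hcop, hle, -⟩ := hS v hvS
    have hprodall : Squarefree (∏ i, v i) :=
      squarefree_prod _ v (fun i _ => hsq i) (fun i _ j _ hij => hcop i j hij)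
    have hmul : (g v).1 * (g v).2 = ∏ i, v i := by
      rw [hgdef]
      simp only
      rw [mul_comm, Finset.prod_filter_mul_prod_filter_not]
    have e1 : (g v).1 = ∏ i ∈ Finset.univ.filter (fun i => ¬ 2 * z ≤ v i), v i := rfl
    have e2 : (g v).2 = ∏ i ∈ Finset.univ.filter (fun i => 2 * z ≤ v i), v i := rfl
    refine ⟨e1 ▸ Finset.one_le_prod' fun i _ => h1 i, e2 ▸ Finset.one_le_prod' fun i _ => h1 i,
      by rw [hmul]; exact hle, ?_, ?_, ?_⟩
    · exact hprodall.squarefree_of_dvd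
        (hmul ▸ Dvd.intro _ rfl)
    · exact hprodall.squarefree_of_dvd (hmul ▸ Dvd.intro_left _ rfl)
    · calc (g v).1 = ∏ i ∈ Finset.univ.filter (fun i => ¬ 2 * z ≤ v i), v i := rfl
        _ ≤ ∏ i ∈ Finset.univ.filter (fun i => ¬ 2 * z ≤ v i), (2 * z) :=
            Finset.prod_le_prod' fun i hi =>
              le_of_not_ge (Finset.mem_filter.mp hi).2
        _ = (2 * z) ^ (Finset.univ.filter (fun i => ¬ 2 * z ≤ v i)).card :=
            Finset.prod_const _
        _ ≤ M := by
            rw [hMdef]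
            exact Nat.pow_le_pow_right (by omega)
              (le_trans (Finset.card_filter_le _ _) (by simp))
  -- fiber cardinality bound
  have hfibcard : ∀ p ∈ S.image g, ((S.filter fun v => g v = p).card : ℕ)
      ≤ 6 ^ p.1.primeFactors.card * (15 * 2 ^ p.2.primeFactors.card) := by
    intro p hp
    obtain ⟨-, -, -, hsq1, hsq2, -⟩ := hI p hp
    set A := {u : Fin 6 → ℕ // (∀ i, Squarefree (u i)) ∧
        (∀ i j, i ≠ j → Nat.Coprime (u i) (u j)) ∧ (∏ i, u i) = p.1} with hA
    set B := {u : Fin 6 → ℕ // (∀ i, Squarefree (u i)) ∧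
        (∀ i j, i ≠ j → Nat.Coprime (u i) (u j)) ∧ (∏ i, u i) = p.2 ∧
        (∀ i, u i = 1 ∨ 2 * z ≤ u i) ∧
        (Finset.univ.filter fun i => 2 * z ≤ u i).card ≤ 2} with hB
    haveI hfA : Finite A := part1_finite 6 p.1 (by norm_num) hsq1
    haveI hfB : Finite B := part2_finite p.2 z hsq2 hz
    -- the injection
    have hinj : ∃ ψ : {v // v ∈ S.filter fun v => g v = p} → A × B, Function.Injective ψ := by
      have hmemA : ∀ v : {v // v ∈ S.filter fun v => g v = p},
          (∀ i, Squarefree (if 2 * z ≤ (v : Fin 6 → ℕ) i then 1 else (v : Fin 6 → ℕ) i)) ∧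
          (∀ i j, i ≠ j → Nat.Coprime (if 2 * z ≤ (v : Fin 6 → ℕ) i then 1 else (v : Fin 6 → ℕ) i)
            (if 2 * z ≤ (v : Fin 6 → ℕ) j then 1 else (v : Fin 6 → ℕ) j)) ∧
          (∏ i, if 2 * z ≤ (v : Fin 6 → ℕ) i then 1 else (v : Fin 6 → ℕ) i) = p.1 := by
        rintro ⟨v, hv⟩
        obtain ⟨hvS, hgv⟩ := Finset.mem_filter.mp hv
        obtain ⟨h1, hsq, hcop, -, -⟩ := hS v hvS
        simp only
        refine ⟨fun i => ?_, fun i j hij => ?_, ?_⟩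
        · split
          · exact squarefree_one
          · exact hsq i
        · have d1 : (if 2 * z ≤ v i then 1 else v i) ∣ v i := by split <;> simp
          have d2 : (if 2 * z ≤ v j then 1 else v j) ∣ v j := by split <;> simp
          exact Nat.Coprime.coprime_dvd_right d2 (Nat.Coprime.coprime_dvd_left d1 (hcop i j hij))
        · rw [← Finset.prod_filter_mul_prod_filter_not Finset.univ (fun i => 2 * z ≤ v i)]
          rw [Finset.prod_congr rfl (fun i hi => if_pos (Finset.mem_filter.mp hi).2),
            Finset.prod_congr (M := ℕ) rfl (fun i hi => if_neg (Finset.mem_filter.mp hi).2)]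
          rw [Finset.prod_const_one, one_mul, ← hgv]
      have hmemB : ∀ v : {v // v ∈ S.filter fun v => g v = p},
          (∀ i, Squarefree (if 2 * z ≤ (v : Fin 6 → ℕ) i then (v : Fin 6 → ℕ) i else 1)) ∧
          (∀ i j, i ≠ j → Nat.Coprime (if 2 * z ≤ (v : Fin 6 → ℕ) i then (v : Fin 6 → ℕ) i else 1)
            (if 2 * z ≤ (v : Fin 6 → ℕ) j then (v : Fin 6 → ℕ) j else 1)) ∧
          (∏ i, if 2 * z ≤ (v : Fin 6 → ℕ) i then (v : Fin 6 → ℕ) i else 1) = p.2 ∧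
          (∀ i, (if 2 * z ≤ (v : Fin 6 → ℕ) i then (v : Fin 6 → ℕ) i else 1) = 1
            ∨ 2 * z ≤ (if 2 * z ≤ (v : Fin 6 → ℕ) i then (v : Fin 6 → ℕ) i else 1)) ∧
          (Finset.univ.filter fun i =>
            2 * z ≤ (if 2 * z ≤ (v : Fin 6 → ℕ) i then (v : Fin 6 → ℕ) i else 1)).card ≤ 2 := by
        rintro ⟨v, hv⟩
        obtain ⟨hvS, hgv⟩ := Finset.mem_filter.mp hv
        obtain ⟨h1, hsq, hcop, -, hbig⟩ := hS v hvS
        simp only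
        have hfeq : (Finset.univ.filter fun i =>
            2 * z ≤ (if 2 * z ≤ v i then v i else 1))
            = Finset.univ.filter fun i => 2 * z ≤ v i := by
          refine Finset.filter_congr fun i _ => ?_
          by_cases h : 2 * z ≤ v i
          · simp [h]
          · simp [h]; omega
        refine ⟨fun i => ?_, fun i j hij => ?_, ?_, fun i => ?_, ?_⟩
        · split
          · exact hsq i
          · exact squarefree_one
        · have d1 : (if 2 * z ≤ v i then v i else 1) ∣ v i := by split <;> simp
          have d2 : (if 2 * z ≤ v j then v j else 1) ∣ v j := by split <;> simp
          exact Nat.Coprime.coprime_dvd_right d2 (Nat.Coprime.coprime_dvd_left d1 (hcop i j hij))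
        · rw [← Finset.prod_filter_mul_prod_filter_not Finset.univ (fun i => 2 * z ≤ v i)]
          rw [Finset.prod_congr rfl (fun i hi => if_pos (Finset.mem_filter.mp hi).2),
            Finset.prod_congr (M := ℕ) rfl (fun i hi => if_neg (Finset.mem_filter.mp hi).2)]
          rw [Finset.prod_const_one, mul_one, ← hgv]
        · by_cases h : 2 * z ≤ v i
          · right; rwa [if_pos h]
          · left; rw [if_neg h]
        · rw [hfeq]; exact hbig
      refine ⟨fun v => (⟨fun i => if 2 * z ≤ (v : Fin 6 → ℕ) i then 1 else (v : Fin 6 → ℕ) i,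
          hmemA v⟩, ⟨fun i => if 2 * z ≤ (v : Fin 6 → ℕ) i then (v : Fin 6 → ℕ) i else 1,
          hmemB v⟩), ?_⟩
      intro a b hab
      have hA' : (fun i => if 2 * z ≤ (a : Fin 6 → ℕ) i then 1 else (a : Fin 6 → ℕ) i)
          = (fun i => if 2 * z ≤ (b : Fin 6 → ℕ) i then 1 else (b : Fin 6 → ℕ) i) :=
        congrArg Subtype.val (congrArg Prod.fst hab)
      have hB' : (fun i => if 2 * z ≤ (a : Fin 6 → ℕ) i then (a : Fin 6 → ℕ) i else 1)
          = (fun i => if 2 * z ≤ (b : Fin 6 → ℕ) i then (b : Fin 6 → ℕ) i else 1) :=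
        congrArg Subtype.val (congrArg Prod.snd hab)
      refine Subtype.ext (funext fun i => ?_)
      have key : ∀ c : {v // v ∈ S.filter fun v => g v = p}, (c : Fin 6 → ℕ) i
          = (if 2 * z ≤ (c : Fin 6 → ℕ) i then 1 else (c : Fin 6 → ℕ) i)
            * (if 2 * z ≤ (c : Fin 6 → ℕ) i then (c : Fin 6 → ℕ) i else 1) := by
        intro c
        split <;> simp
      rw [key a, key b, congrFun hA' i, congrFun hB' i]
    obtain ⟨ψ, hψ⟩ := hinj
    calc ((S.filter fun v => g v = p).card : ℕ)
        = Nat.card {v // v ∈ S.filter fun v => g v = p} :=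
          (Nat.card_eq_finsetCard _).symm
      _ ≤ Nat.card (A × B) := Nat.card_le_card_of_injective ψ hψ
      _ = Nat.card A * Nat.card B := Nat.card_prod A B
      _ ≤ 6 ^ p.1.primeFactors.card * (15 * 2 ^ p.2.primeFactors.card) :=
          Nat.mul_le_mul (part1 6 p.1 (by norm_num) hsq1) (part2 p.2 z hsq2 hz)
  -- inner sum bound
  have hinner : ∀ p ∈ S.image g,
      ∑ v ∈ S.filter (fun v => g v = p), w v ≤ 15 * 3 ^ p.1.primeFactors.card := by
    intro p hp
    set a := p.1.primeFactors.card
    set b := p.2.primeFactors.card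
    have hconst : ∀ v ∈ S.filter (fun v => g v = p), w v = ((2:ℝ) ^ (a + b))⁻¹ := by
      intro v hv
      obtain ⟨hvS, hgv⟩ := Finset.mem_filter.mp hv
      rw [hW v hvS, hgv]
    rw [Finset.sum_congr rfl hconst, Finset.sum_const, nsmul_eq_mul]
    have hcard : ((S.filter fun v => g v = p).card : ℝ)
        ≤ (6:ℝ) ^ a * (15 * 2 ^ b) := by
      exact_mod_cast hfibcard p hp
    calc ((S.filter fun v => g v = p).card : ℝ) * ((2:ℝ) ^ (a + b))⁻¹
        ≤ ((6:ℝ) ^ a * (15 * 2 ^ b)) * ((2:ℝ) ^ (a + b))⁻¹ :=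
          mul_le_mul_of_nonneg_right hcard (by positivity)
      _ = 15 * 3 ^ a := by
          rw [show (6:ℝ) = 3 * 2 by norm_num, mul_pow, pow_add]
          field_simp
  -- grouping by first coordinate
  have hcardn : ∀ m ∈ (S.image g).image Prod.fst,
      (((S.image g).filter fun p => p.1 = m).card : ℝ) ≤ X / m := by
    intro m hm
    obtain ⟨p₀, hp₀, hp₀m⟩ := Finset.mem_image.mp hm
    have hm1 : 1 ≤ m := hp₀m ▸ (hI p₀ hp₀).1
    have hm0 : (0:ℝ) < m := by exact_mod_cast hm1
    have hsub : ((S.image g).filter fun p => p.1 = m) ⊆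
        ((S.image g).filter fun p => p.1 = m) := le_refl _
    have hmap : ∀ p ∈ (S.image g).filter fun p => p.1 = m,
        p.2 ∈ Finset.Icc 1 ⌊X / m⌋₊ := by
      intro p hp
      obtain ⟨hpI, hpm⟩ := Finset.mem_filter.mp hp
      obtain ⟨-, h2, hle, -, -, -⟩ := hI p hpI
      refine Finset.mem_Icc.mpr ⟨h2, Nat.le_floor ?_⟩
      rw [le_div_iff₀ hm0]
      calc ((p.2 : ℝ)) * m = ((p.1 * p.2 : ℕ) : ℝ) := by
            rw [hpm]; push_cast; ring
        _ ≤ X := hle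
    have hinj2 : Set.InjOn Prod.snd (((S.image g).filter fun p => p.1 = m : Finset (ℕ × ℕ)) : Set (ℕ × ℕ)) := by
      intro p hp q hq hpq
      have h1 : p.1 = m := (Finset.mem_filter.mp hp).2
      have h2 : q.1 = m := (Finset.mem_filter.mp hq).2
      exact Prod.ext (h1.trans h2.symm) hpq
    calc (((S.image g).filter fun p => p.1 = m).card : ℝ)
        ≤ ((Finset.Icc 1 ⌊X / m⌋₊).card : ℝ) := by
          exact_mod_cast Finset.card_le_card_of_injOn Prod.snd hmap hinj2
      _ = (⌊X / m⌋₊ : ℝ) := by rw [Nat.card_Icc]; simp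
      _ ≤ X / m := Nat.floor_le (by positivity)
  -- J ⊆ Icc 1 M filter Squarefree
  have hJsub : (S.image g).image Prod.fst ⊆ (Finset.Icc 1 M).filter Squarefree := by
    intro m hm
    obtain ⟨p, hp, rfl⟩ := Finset.mem_image.mp hm
    obtain ⟨h1, -, -, hsq, -, hM'⟩ := hI p hp
    exact Finset.mem_filter.mpr ⟨Finset.mem_Icc.mpr ⟨h1, hM'⟩, hsq⟩
  -- harmonic bound
  have hlogz : (0:ℝ) < Real.log z := by
    have := Real.log_two_gt_d9
    have hzl : Real.log 2 ≤ Real.log z :=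
      Real.log_le_log (by norm_num) (by exact_mod_cast hz)
    linarith
  have hH : ∑ k ∈ Finset.Icc 1 M, (1:ℝ) / k ≤ 14 * Real.log z := by
    have heq : ∑ k ∈ Finset.Icc 1 M, (1:ℝ) / k = ((harmonic M : ℚ) : ℝ) := by
      rw [harmonic_eq_sum_Icc]
      push_cast
      simp [one_div]
    have hle : ((harmonic M : ℚ) : ℝ) ≤ 1 + Real.log M := harmonic_le_one_add_log M
    have hlogM : Real.log M ≤ 12 * Real.log z := by
      rw [hMdef]
      push_cast
      rw [Real.log_pow]
      have h2z : Real.log (2 * (z:ℝ)) ≤ 2 * Real.log z := by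
        rw [show (2:ℝ) * Real.log z = Real.log ((z:ℝ)^2) by rw [Real.log_pow]; push_cast; ring]
        refine Real.log_le_log (by positivity) ?_
        have : (2:ℝ) ≤ z := by exact_mod_cast hz
        nlinarith
      calc (6:ℝ) * Real.log (2 * z) ≤ 6 * (2 * Real.log z) := by linarith
        _ = 12 * Real.log z := by ring
    have h1 : (1:ℝ) ≤ 2 * Real.log z := by
      have := Real.log_two_gt_d9
      have hzl : Real.log 2 ≤ Real.log z :=
        Real.log_le_log (by norm_num) (by exact_mod_cast hz)
      linarith
    linarith [heq ▸ hle]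
  have hH0 : (0:ℝ) ≤ ∑ k ∈ Finset.Icc 1 M, (1:ℝ) / k :=
    Finset.sum_nonneg fun k _ => by positivity
  -- main chain
  calc ∑ v ∈ S, w v
      = ∑ p ∈ S.image g, ∑ v ∈ S.filter (fun v => g v = p), w v :=
        (Finset.sum_fiberwise_of_maps_to (fun v hv => Finset.mem_image_of_mem g hv) w).symm
    _ ≤ ∑ p ∈ S.image g, 15 * 3 ^ p.1.primeFactors.card := Finset.sum_le_sum hinner
    _ = ∑ m ∈ (S.image g).image Prod.fst, ∑ p ∈ (S.image g).filter (fun p => p.1 = m),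
          (15 * 3 ^ p.1.primeFactors.card : ℝ) :=
        (Finset.sum_fiberwise_of_maps_to (fun p hp => Finset.mem_image_of_mem Prod.fst hp) _).symm
    _ = ∑ m ∈ (S.image g).image Prod.fst,
          (((S.image g).filter fun p => p.1 = m).card : ℝ) * (15 * 3 ^ m.primeFactors.card) := by
        refine Finset.sum_congr rfl fun m hm => ?_
        rw [Finset.sum_congr rfl (fun p hp => by
          rw [(Finset.mem_filter.mp hp).2] : ∀ p ∈ (S.image g).filter (fun p => p.1 = m),
            (15 * 3 ^ p.1.primeFactors.card : ℝ) = 15 * 3 ^ m.primeFactors.card),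
          Finset.sum_const, nsmul_eq_mul]
    _ ≤ ∑ m ∈ (S.image g).image Prod.fst, (X / m) * (15 * 3 ^ m.primeFactors.card) := by
        refine Finset.sum_le_sum fun m hm => ?_
        exact mul_le_mul_of_nonneg_right (hcardn m hm) (by positivity)
    _ = 15 * X * ∑ m ∈ (S.image g).image Prod.fst, (3:ℝ) ^ m.primeFactors.card / m := by
        rw [Finset.mul_sum]
        refine Finset.sum_congr rfl fun m hm => ?_
        field_simp
    _ ≤ 15 * X * ∑ m ∈ (Finset.Icc 1 M).filter Squarefree, (3:ℝ) ^ m.primeFactors.card / m := by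
        refine mul_le_mul_of_nonneg_left
          (Finset.sum_le_sum_of_subset_of_nonneg hJsub fun m _ _ => by positivity)
          (by positivity)
    _ ≤ 15 * X * (∑ k ∈ Finset.Icc 1 M, (1:ℝ) / k) ^ 3 :=
        mul_le_mul_of_nonneg_left (sum_three_omega M hM1) (by positivity)
    _ ≤ 15 * X * (14 * Real.log z) ^ 3 := by
        refine mul_le_mul_of_nonneg_left (pow_le_pow_left₀ hH0 hH 3) (by positivity)
    _ = 15 * 14 ^ 3 * (X * Real.log z ^ 3) := by ring


open Classical in
/-- Counting bounds for tuples of six pairwise coprime squarefree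
integers: a squarefree `m` arises from at most `6^{ω(m)}` tuples, a squarefree `n`
arises from at most `15·2^{ω(n)}` tuples having at most two large coordinates, and
consequently the weighted sum `∑ 2^{−ω(n₁)}⋯2^{−ω(n₆)}` over tuples with product at
most `√x` and at most two coordinates exceeding `2z` is `≪ √x (log z)³`. -/
theorem six_tuple_counting_and_sum_bound :
    (∀ m : ℕ, Squarefree m →
      Nat.card {v : Fin 6 → ℕ // (∀ i, Squarefree (v i)) ∧
          (∀ i j, i ≠ j → Nat.Coprime (v i) (v j)) ∧ (∏ i, v i) = m} ≤
        6 ^ m.primeFactors.card) ∧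
    (∀ n z : ℕ, Squarefree n → 2 ≤ z →
      Nat.card {v : Fin 6 → ℕ // (∀ i, Squarefree (v i)) ∧
          (∀ i j, i ≠ j → Nat.Coprime (v i) (v j)) ∧ (∏ i, v i) = n ∧
          (∀ i, v i = 1 ∨ 2 * z ≤ v i) ∧
          (Finset.univ.filter fun i => 2 * z ≤ v i).card ≤ 2} ≤
        15 * 2 ^ n.primeFactors.card) ∧
    (∃ C : ℝ, 0 < C ∧ ∀ (x : ℝ) (z : ℕ), 2 ≤ x → 2 ≤ z →
      ∑ v ∈ (Fintype.piFinset fun _ : Fin 6 => Finset.Icc 1 ⌊Real.sqrt x⌋₊).filter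
          (fun v => (∀ i, Squarefree (v i)) ∧
            (∀ i j, i ≠ j → Nat.Coprime (v i) (v j)) ∧
            ((∏ i, v i : ℕ) : ℝ) ≤ Real.sqrt x ∧
            (Finset.univ.filter fun i => 2 * z ≤ v i).card ≤ 2),
          ∏ i, (2 : ℝ) ^ (-((v i).primeFactors.card : ℤ)) ≤
        C * (Real.sqrt x * Real.log z ^ 3)) := by
  exact ⟨fun m hm => part1 6 m (by norm_num) hm,
    fun n z hn hz => part2 n z hn hz, part3⟩
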